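/- arXiv:math/0411054 — 2 statements merged into one kernel-verified Lean document; each statement's English description precedes it below -/
import Mathlib

section
/- For every integer a ≥ 1, the characteristic polynomial of the 3×3 integer matrix with rows (0,1,0), (0,0,1), (1,a,−2a−3) equals X³ + (2a+3)X² − aX − 1; it is irreducible over ℚ and has three distinct real roots. -/
open Matrix Polynomial

/-- An integer polynomial has three distinct real roots. -/
def hasThreeDistinctRealRoots (p : Polynomial ℤ) : Prop :=
  ∃ x y z : ℝ, x ≠ y ∧ x ≠ z ∧ y ≠ z ∧
    (p.map (Int.castRingHom ℝ)).IsRoot x ∧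
    (p.map (Int.castRingHom ℝ)).IsRoot y ∧
    (p.map (Int.castRingHom ℝ)).IsRoot z

/-! The last row of the companion matrix gives the characteristic polynomial, which is therefore
`X³ + (2a+3)X² - aX - 1`. Being monic of degree three with constant term `-1`, it is irreducible
over `ℚ` as soon as `±1` are not roots (rational root theorem), and its values at
`-2a-4, -1, 0, 1` alternate in sign, so it has a real root in each of the three gaps. -/

theorem charpoly_companion_fin_three {R : Type*} [CommRing R] (c₀ c₁ c₂ : R) :
    (!![0, 1, 0; 0, 0, 1; c₀, c₁, c₂] : Matrix (Fin 3) (Fin 3) R).charpoly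
      = X ^ 3 - C c₂ * X ^ 2 - C c₁ * X - C c₀ := by
  rw [Matrix.charpoly, Matrix.det_fin_three]
  simp only [charmatrix_apply_eq, charmatrix_apply_ne, of_apply, cons_val', cons_val_zero,
    cons_val_one, cons_val, cons_val_fin_one, ne_eq, Fin.reduceEq, not_false_eq_true, map_zero,
    map_one]
  ring

theorem irreducible_map_of_monic_of_not_isRoot_of_dvd_coeff_zero {A K : Type*} [CommRing A]
    [IsDomain A] [UniqueFactorizationMonoid A] [Field K] [Algebra A K] [IsFractionRing A K]
    {p : A[X]} (hp : p.Monic) (hdeg : p.natDegree ∈ Finset.Icc 1 3)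
    (hroot : ∀ n : A, n ∣ p.coeff 0 → ¬ p.IsRoot n) :
    Irreducible (p.map (algebraMap A K)) := by
  rw [← hp.natDegree_map (algebraMap A K)] at hdeg
  refine irreducible_of_degree_le_three_of_not_isRoot hdeg fun x hx => ?_
  have hx' : aeval x p = 0 := by rwa [aeval_def, ← eval_map]
  obtain ⟨n, rfl, hn⟩ := exists_integer_of_is_root_of_monic hp hx'
  refine hroot n hn (IsFractionRing.injective A K ?_)
  rw [← eval₂_at_apply, ← eval_map, map_zero]
  exact hx

theorem hasThreeDistinctRealRoots_of_sign_changes {p : ℤ[X]} {x₀ x₁ x₂ x₃ : ℝ}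
    (h₀₁ : x₀ < x₁) (h₁₂ : x₁ < x₂) (h₂₃ : x₂ < x₃)
    (h₀ : (p.map (Int.castRingHom ℝ)).eval x₀ < 0) (h₁ : 0 < (p.map (Int.castRingHom ℝ)).eval x₁)
    (h₂ : (p.map (Int.castRingHom ℝ)).eval x₂ < 0) (h₃ : 0 < (p.map (Int.castRingHom ℝ)).eval x₃) :
    hasThreeDistinctRealRoots p := by
  have hcont : ∀ s, ContinuousOn (fun x => (p.map (Int.castRingHom ℝ)).eval x) s :=
    fun _ => (Polynomial.continuous _).continuousOn
  obtain ⟨x, hx, hx0⟩ := intermediate_value_Ioo h₀₁.le (hcont _) ⟨h₀, h₁⟩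
  obtain ⟨y, hy, hy0⟩ := intermediate_value_Ioo' h₁₂.le (hcont _) ⟨h₂, h₁⟩
  obtain ⟨z, hz, hz0⟩ := intermediate_value_Ioo h₂₃.le (hcont _) ⟨h₂, h₃⟩
  refine ⟨x, y, z, ?_, ?_, ?_, hx0, hy0, hz0⟩
  · exact (hx.2.trans hy.1).ne
  · exact (hx.2.trans (hy.1.trans (hy.2.trans hz.1))).ne
  · exact (hy.2.trans hz.1).ne

theorem charpoly_four_triangle_family (a : ℤ) (ha : 1 ≤ a) :
    (!![0, 1, 0; 0, 0, 1; 1, a, -2 * a - 3] : Matrix (Fin 3) (Fin 3) ℤ).charpoly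
      = X ^ 3 + C (2 * a + 3) * X ^ 2 - C a * X - 1 ∧
    Irreducible
      (((!![0, 1, 0; 0, 0, 1; 1, a, -2 * a - 3] : Matrix (Fin 3) (Fin 3) ℤ).charpoly).map
        (Int.castRingHom ℚ)) ∧
    hasThreeDistinctRealRoots
      (!![0, 1, 0; 0, 0, 1; 1, a, -2 * a - 3] : Matrix (Fin 3) (Fin 3) ℤ).charpoly := by
  have hchar : (!![0, 1, 0; 0, 0, 1; 1, a, -2 * a - 3] : Matrix (Fin 3) (Fin 3) ℤ).charpoly
      = X ^ 3 + C (2 * a + 3) * X ^ 2 - C a * X - 1 := by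
    rw [charpoly_companion_fin_three, show -2 * a - 3 = -(2 * a + 3) by ring, C_neg, C_1]
    ring
  have hmonic := hchar ▸ Matrix.charpoly_monic _
  have hdeg := hchar ▸ Matrix.charpoly_natDegree_eq_dim (!![0, 1, 0; 0, 0, 1; 1, a, -2 * a - 3])
  refine ⟨hchar, ?_, ?_⟩ <;> rw [hchar]
  · rw [← algebraMap_int_eq]
    refine irreducible_map_of_monic_of_not_isRoot_of_dvd_coeff_zero hmonic
      (by rw [hdeg, Fintype.card_fin]; decide) fun n hn hroot => ?_
    have hunit : n = 1 ∨ n = -1 := Int.isUnit_iff.1 (isUnit_of_dvd_unit hn (by simp))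
    simp only [IsRoot, eval_sub, eval_add, eval_mul, eval_pow, eval_C, eval_X, eval_one] at hroot
    rcases hunit with rfl | rfl <;> omega
  · have heval : ∀ x : ℝ, ((X ^ 3 + C (2 * a + 3) * X ^ 2 - C a * X - 1 : ℤ[X]).map
        (Int.castRingHom ℝ)).eval x = x ^ 3 + (2 * a + 3) * x ^ 2 - a * x - 1 := by
      intro x; simp
    have ha' : (1 : ℝ) ≤ a := by exact_mod_cast ha
    refine hasThreeDistinctRealRoots_of_sign_changes (x₀ := -2 * a - 4) (x₁ := -1) (x₂ := 0)
      (x₃ := 1) (by linarith) (by norm_num) (by norm_num) ?_ ?_ ?_ ?_ <;> rw [heval] <;> nlinarith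
end

section
/- For all integers a ≥ 1 and b ≥ 0, the characteristic polynomial of the 3×3 integer matrix with rows (0,1,0), (0,0,1), (1,(a+2)(b+2)−3,3−(a+2)(b+3)) equals X³ + ((a+2)(b+3)−3)X² − ((a+2)(b+2)−3)X − 1; it is irreducible over ℚ and has three distinct real roots. -/
open Matrix Polynomial

theorem irreducible_map_rat_of_forall_dvd_coeff_zero_not_isRoot {p : ℤ[X]} (hp : p.Monic)
    (hp2 : 2 ≤ p.natDegree) (hp3 : p.natDegree ≤ 3)
    (hroot : ∀ m : ℤ, m ∣ p.coeff 0 → ¬ p.IsRoot m) :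
    Irreducible (p.map (Int.castRingHom ℚ)) := by
  rw [irreducible_iff_roots_eq_zero_of_degree_le_three (by rwa [hp.natDegree_map])
    (by rwa [hp.natDegree_map]), Multiset.eq_zero_iff_forall_notMem]
  intro r hr
  rw [mem_roots_map_of_injective (RingHom.injective_int _) hp.ne_zero] at hr
  obtain ⟨m, rfl, hm⟩ := exists_integer_of_is_root_of_monic hp (r := r) hr
  refine hroot m hm ?_
  rwa [algebraMap_int_eq, eval₂_hom, map_eq_zero_iff _ (RingHom.injective_int _)] at hr

theorem exists_three_zeros_of_sign_changes {f : ℝ → ℝ} (hf : Continuous f) {x₀ x₁ x₂ x₃ : ℝ}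
    (h₀₁ : x₀ ≤ x₁) (h₁₂ : x₁ ≤ x₂) (h₂₃ : x₂ ≤ x₃)
    (h₀ : f x₀ < 0) (h₁ : 0 < f x₁) (h₂ : f x₂ < 0) (h₃ : 0 < f x₃) :
    ∃ x y z, x < y ∧ y < z ∧ f x = 0 ∧ f y = 0 ∧ f z = 0 := by
  obtain ⟨x, hx, hfx⟩ := intermediate_value_Ioo h₀₁ hf.continuousOn ⟨h₀, h₁⟩
  obtain ⟨y, hy, hfy⟩ := intermediate_value_Ioo' h₁₂ hf.continuousOn ⟨h₂, h₁⟩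
  obtain ⟨z, hz, hfz⟩ := intermediate_value_Ioo h₂₃ hf.continuousOn ⟨h₂, h₃⟩
  exact ⟨x, y, z, hx.2.trans hy.1, hy.2.trans hz.1, hfx, hfy, hfz⟩

section Cubic

variable {A B : ℤ}

theorem irreducible_map_rat_cubic (hA : 0 < A) (hAB : A < B) :
    Irreducible ((X ^ 3 + C B * X ^ 2 - C A * X - 1 : ℤ[X]).map (Int.castRingHom ℚ)) := by
  have hdeg : (X ^ 3 + C B * X ^ 2 - C A * X - 1 : ℤ[X]).natDegree = 3 := by compute_degree!
  refine irreducible_map_rat_of_forall_dvd_coeff_zero_not_isRoot (by monicity!)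
    (by omega) hdeg.le fun m hm hroot => ?_
  have hcoeff : (X ^ 3 + C B * X ^ 2 - C A * X - 1 : ℤ[X]).coeff 0 = -1 := by simp
  rw [hcoeff, dvd_neg] at hm
  rcases Int.isUnit_iff.mp (isUnit_of_dvd_one hm) with rfl | rfl <;>
    simp only [IsRoot.def, eval_sub, eval_add, eval_mul, eval_pow, eval_X, eval_C, eval_one]
      at hroot <;> linarith

theorem hasThreeDistinctRealRoots_cubic (hA : 0 < A) (hAB : A < B) :
    hasThreeDistinctRealRoots (X ^ 3 + C B * X ^ 2 - C A * X - 1) := by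
  have hA' : (1 : ℝ) ≤ A := by exact_mod_cast hA
  have hAB' : (A : ℝ) + 1 ≤ B := by exact_mod_cast hAB
  -- the values at `-B - 1, -B, 0, 1` are `(B + 1)(A - B - 1) - 1, AB - 1, -1, B - A`
  obtain ⟨x, y, z, hxy, hyz, hx, hy, hz⟩ := exists_three_zeros_of_sign_changes
    (f := fun t : ℝ => t ^ 3 + B * t ^ 2 - A * t - 1) (by fun_prop)
    (x₀ := -B - 1) (x₁ := -B) (x₂ := 0) (x₃ := 1) (by linarith) (by linarith) zero_le_one
    (by nlinarith) (by nlinarith) (by norm_num) (by linarith)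
  exact ⟨x, y, z, hxy.ne, (hxy.trans hyz).ne, hyz.ne, by simpa using hx, by simpa using hy,
    by simpa using hz⟩

end Cubic

theorem charpoly_quadrilateral_family (a b : ℤ) (ha : 1 ≤ a) (hb : 0 ≤ b) :
    (!![0, 1, 0; 0, 0, 1; 1, (a + 2) * (b + 2) - 3, 3 - (a + 2) * (b + 3)] :
        Matrix (Fin 3) (Fin 3) ℤ).charpoly
      = X ^ 3 + C ((a + 2) * (b + 3) - 3) * X ^ 2 - C ((a + 2) * (b + 2) - 3) * X - 1 ∧
    Irreducible
      (((!![0, 1, 0; 0, 0, 1; 1, (a + 2) * (b + 2) - 3, 3 - (a + 2) * (b + 3)] :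
          Matrix (Fin 3) (Fin 3) ℤ).charpoly).map (Int.castRingHom ℚ)) ∧
    hasThreeDistinctRealRoots
      (!![0, 1, 0; 0, 0, 1; 1, (a + 2) * (b + 2) - 3, 3 - (a + 2) * (b + 3)] :
        Matrix (Fin 3) (Fin 3) ℤ).charpoly := by
  have hcharpoly : (!![0, 1, 0; 0, 0, 1; 1, (a + 2) * (b + 2) - 3, 3 - (a + 2) * (b + 3)] :
      Matrix (Fin 3) (Fin 3) ℤ).charpoly
        = X ^ 3 + C ((a + 2) * (b + 3) - 3) * X ^ 2 - C ((a + 2) * (b + 2) - 3) * X - 1 := by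
    rw [charpoly_companion_fin_three, show 3 - (a + 2) * (b + 3) = -((a + 2) * (b + 3) - 3) by ring,
      C_neg, C_1]
    ring
  have hA : 0 < (a + 2) * (b + 2) - 3 := by nlinarith
  have hAB : (a + 2) * (b + 2) - 3 < (a + 2) * (b + 3) - 3 := by nlinarith
  rw [hcharpoly]
  exact ⟨rfl, irreducible_map_rat_cubic hA hAB, hasThreeDistinctRealRoots_cubic hA hAB⟩
end
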